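/- Under the early-exit (partial matrix) validation with a fixed execution order, if every test selected by the finer RTS strategy is also selected by the coarser strategy and both strategies only skip tests that would pass, then the first failing test encountered is the same under both strategies, and the number of tests executed by the finer strategy is at most that executed by the coarser strategy. -/

import Mathlib

/-!
Both selections contain every failing test of `L`, so filtering does not change which failure
comes first. Up to that failure every selected test passes, and the finer strategy runs a
subset of the tests the coarser one runs.
-/

inductive Outcome | pass | fail
deriving DecidableEq

/-- Number of tests executed by early-exit validation on an ordered list. -/
def execCount {Test : Type*} (result : Test → Outcome) : List Test → ℕ
  | [] => 0
  | t :: L => if result t = .fail then 1 else 1 + execCount result L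

namespace List

variable {α : Type*}

theorem find?_filter_of_forall_imp {p q : α → Bool} (L : List α)
    (h : ∀ a ∈ L, q a → p a) : (L.filter p).find? q = L.find? q := by
  induction L with
  | nil => rfl
  | cons a L ih =>
    have ih := ih fun b hb => h b (mem_cons_of_mem a hb)
    by_cases hq : q a
    · simp [h a mem_cons_self hq, hq]
    · by_cases hp : p a <;> simp [hp, hq, ih]

end List

section execCount

variable {Test : Type*} (result : Test → Outcome)

theorem execCount_filter_cons_of_fail {t : Test} (p : Test → Bool) (L : List Test)
    (hr : result t = .fail) (hp : p t) : execCount result ((t :: L).filter p) = 1 := by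
  simp [execCount, hp, hr]

theorem execCount_filter_cons_of_ne_fail {t : Test} (p : Test → Bool) (L : List Test)
    (hr : result t ≠ .fail) :
    execCount result ((t :: L).filter p) =
      execCount result (L.filter p) + if p t then 1 else 0 := by
  by_cases hp : p t <;> simp [execCount, hp, hr, Nat.add_comm]

theorem execCount_filter_le_filter {p q : Test → Bool} (L : List Test)
    (hpq : ∀ t ∈ L, p t → q t) (hfail : ∀ t ∈ L, result t = .fail → p t) :
    execCount result (L.filter p) ≤ execCount result (L.filter q) := by
  induction L with
  | nil => rfl
  | cons t L ih =>
    have ih := ih (fun u hu => hpq u (List.mem_cons_of_mem t hu))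
      (fun u hu => hfail u (List.mem_cons_of_mem t hu))
    by_cases hr : result t = .fail
    · have hp := hfail t List.mem_cons_self hr
      rw [execCount_filter_cons_of_fail result p L hr hp,
        execCount_filter_cons_of_fail result q L hr (hpq t List.mem_cons_self hp)]
    · have hpq_t := hpq t List.mem_cons_self
      have hstep : (if p t then 1 else 0) ≤ (if q t then 1 else 0) := by
        split_ifs <;> simp_all
      rw [execCount_filter_cons_of_ne_fail result p L hr,
        execCount_filter_cons_of_ne_fail result q L hr]
      omega

end execCount

/-- With early exit and a fixed order, if the finer safe strategy selects a
subset of the coarser safe strategy's tests and both contain all failing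
tests, then the first failing test coincides and the finer strategy executes
at most as many tests. -/
theorem stmt4 {Test : Type*} (result : Test → Outcome) (L : List Test)
    (S_fine S_coarse : Set Test)
    [DecidablePred (· ∈ S_fine)] [DecidablePred (· ∈ S_coarse)]
    (hsub : S_fine ⊆ S_coarse)
    (hsafe : ∀ t ∈ L, result t = .fail → t ∈ S_fine) :
    (L.filter (· ∈ S_fine)).find? (fun t => result t = Outcome.fail) =
      (L.filter (· ∈ S_coarse)).find? (fun t => result t = Outcome.fail) ∧
    execCount result (L.filter (· ∈ S_fine)) ≤
      execCount result (L.filter (· ∈ S_coarse)) := by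
  have hsafe_coarse : ∀ t ∈ L, result t = .fail → t ∈ S_coarse :=
    fun t ht hr => hsub (hsafe t ht hr)
  constructor
  · rw [L.find?_filter_of_forall_imp (by simpa using hsafe),
      L.find?_filter_of_forall_imp (by simpa using hsafe_coarse)]
  · exact execCount_filter_le_filter result L (by simpa using fun t _ => @hsub t)
      (by simpa using hsafe)
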